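/- For every n ∈ ℕ and all x, y ∈ ℝ: P_n(x+y) = ∑_{k+l+m=n} n!/(k!·l!·m!) · P_k(x) · P_l(y) · M_m, where the sum runs over all triples (k,l,m) of natural numbers with k + l + m = n. -/

import Mathlib

/-- The formal exponential series `E_x = ∑ x^k T^k / k!`. -/
noncomputable def expSeries (x : ℝ) : PowerSeries ℝ :=
  PowerSeries.mk fun k => x ^ k / (k.factorial : ℝ)

/-- The one-dimensional Appell polynomials of `l`:
`P_n(x) = n! ⬝ coeff_n (E_x ⬝ l⁻¹)`. -/
noncomputable def appellP (l : PowerSeries ℝ) (n : ℕ) (x : ℝ) : ℝ :=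
  (n.factorial : ℝ) * PowerSeries.coeff (R := ℝ) n (expSeries x * l⁻¹)

/-- The moments of `l`: `M_n = n! ⬝ coeff_n l`. -/
noncomputable def moment (l : PowerSeries ℝ) (n : ℕ) : ℝ :=
  (n.factorial : ℝ) * PowerSeries.coeff (R := ℝ) n l

lemma expSeries_add (x y : ℝ) : expSeries (x + y) = expSeries x * expSeries y := by
  ext n
  rw [PowerSeries.coeff_mul]
  simp only [expSeries, PowerSeries.coeff_mk]
  rw [add_pow]
  rw [Finset.Nat.sum_antidiagonal_eq_sum_range_succ (fun i j => x ^ i / i.factorial * (y ^ j / j.factorial))]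
  rw [Finset.sum_div]
  refine Finset.sum_congr rfl fun i hi => ?_
  have hin : i ≤ n := Nat.lt_succ_iff.mp (Finset.mem_range.mp hi)
  rw [Nat.choose_eq_factorial_div_factorial hin]
  have h := Nat.factorial_mul_factorial_dvd_factorial hin
  have h1 : (i.factorial : ℝ) ≠ 0 := Nat.cast_ne_zero.mpr (Nat.factorial_ne_zero i)
  have h2 : ((n - i).factorial : ℝ) ≠ 0 := Nat.cast_ne_zero.mpr (Nat.factorial_ne_zero _)
  rw [Nat.cast_div h (by positivity)]
  push_cast
  field_simp

lemma coeff_mul_mul (A B C : PowerSeries ℝ) (n : ℕ) :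
    PowerSeries.coeff (R := ℝ) n (A * B * C) =
      ∑ t ∈ (Finset.range (n + 1) ×ˢ Finset.range (n + 1) ×ˢ
          Finset.range (n + 1)).filter (fun t => t.1 + t.2.1 + t.2.2 = n),
        PowerSeries.coeff (R := ℝ) t.1 A * PowerSeries.coeff (R := ℝ) t.2.1 B *
          PowerSeries.coeff (R := ℝ) t.2.2 C := by
  rw [PowerSeries.coeff_mul]
  simp only [PowerSeries.coeff_mul, Finset.sum_mul]
  rw [Finset.sum_sigma']
  refine Finset.sum_nbij' (fun p => (p.2.1, p.2.2, p.1.2))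
    (fun t => ⟨(t.1 + t.2.1, t.2.2), (t.1, t.2.1)⟩) ?_ ?_ ?_ ?_ ?_
  · rintro ⟨⟨a, b⟩, ⟨c, d⟩⟩ hp
    simp only [Finset.mem_sigma, Finset.HasAntidiagonal.mem_antidiagonal] at hp
    obtain ⟨h1, h2⟩ := hp
    simp only [Finset.mem_filter, Finset.mem_product, Finset.mem_range]
    omega
  · rintro ⟨a, b, c⟩ ht
    simp only [Finset.mem_filter, Finset.mem_product, Finset.mem_range] at ht
    simp only [Finset.mem_sigma, Finset.HasAntidiagonal.mem_antidiagonal]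
    exact ⟨by omega, trivial⟩
  · rintro ⟨⟨a, b⟩, ⟨c, d⟩⟩ hp
    simp only [Finset.mem_sigma, Finset.HasAntidiagonal.mem_antidiagonal] at hp
    simp only
    obtain ⟨h1, h2⟩ := hp
    simp [← h2]
  · rintro ⟨a, b, c⟩ _; rfl
  · rintro ⟨⟨a, b⟩, ⟨c, d⟩⟩ _; rfl

/-- (P3): `P_n(x+y) = ∑_{k+l+m=n} n!/(k! l! m!) P_k(x) P_l(y) M_m`. -/
theorem appell_P3 (l : PowerSeries ℝ) (hl : PowerSeries.constantCoeff (R := ℝ) l = 1)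
    (n : ℕ) (x y : ℝ) :
    appellP l n (x + y) =
      ∑ t ∈ (Finset.range (n + 1) ×ˢ Finset.range (n + 1) ×ˢ
          Finset.range (n + 1)).filter (fun t => t.1 + t.2.1 + t.2.2 = n),
        (n.factorial : ℝ) /
            ((t.1.factorial : ℝ) * (t.2.1.factorial : ℝ) * (t.2.2.factorial : ℝ)) *
          appellP l t.1 x * appellP l t.2.1 y * moment l t.2.2 := by
  have hl0 : PowerSeries.constantCoeff (R := ℝ) l ≠ 0 := by rw [hl]; exact one_ne_zero
  have key : expSeries (x + y) * l⁻¹ =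
      (expSeries x * l⁻¹) * (expSeries y * l⁻¹) * l := by
    rw [expSeries_add]
    have : l⁻¹ * l⁻¹ * l = l⁻¹ := by
      rw [mul_assoc, PowerSeries.inv_mul_cancel _ hl0, mul_one]
    calc expSeries x * expSeries y * l⁻¹
        = expSeries x * expSeries y * (l⁻¹ * l⁻¹ * l) := by rw [this]
      _ = expSeries x * l⁻¹ * (expSeries y * l⁻¹) * l := by ring
  rw [appellP, key, coeff_mul_mul, Finset.mul_sum]
  refine Finset.sum_congr rfl fun t ht => ?_
  simp only [Finset.mem_filter, Finset.mem_product, Finset.mem_range] at ht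
  rw [appellP, appellP, moment]
  have h1 : (t.1.factorial : ℝ) ≠ 0 := Nat.cast_ne_zero.mpr (Nat.factorial_ne_zero _)
  have h2 : (t.2.1.factorial : ℝ) ≠ 0 := Nat.cast_ne_zero.mpr (Nat.factorial_ne_zero _)
  have h3 : (t.2.2.factorial : ℝ) ≠ 0 := Nat.cast_ne_zero.mpr (Nat.factorial_ne_zero _)
  field_simp
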